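/- For every model of SCF M over N and K and every state v* of M: v* is a dominant strategy equilibrium of M if and only if M, v* ⊨ DOM, where BR_i = ⋁_{x∈K}( x ∧ □_i⟨pref_i⟩x ) and DOM = ⋀_{i∈N} □_{N∖{i}} BR_i. -/
import Mathlib


open scoped Classical

/-- A linear order relation on `K`: `r x y` means "`x` is ranked at least as high as `y`".
It is reflexive, total-and-antisymmetric, and transitive. -/
def IsLin {K : Type} (r : K → K → Prop) : Prop :=
  (∀ x, r x x) ∧ (∀ x y, x ≠ y → (r x y ↔ ¬ r y x)) ∧ (∀ x y z, r x y → r y z → r x z)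

/-- The set `L(K)` of linear orders on `K`. -/
abbrev LinPref (K : Type) : Type := {r : K → K → Prop // IsLin r}

noncomputable instance (K : Type) [Finite K] : Fintype (LinPref K) :=
  Fintype.ofFinite _

noncomputable instance (N K : Type) [Finite N] [Finite K] : Fintype (N → LinPref K) :=
  Fintype.ofFinite _

inductive Formula (N K : Type) : Type
  | top : Formula N K
  | atom : N → K → K → Formula N K
  | outc : K → Formula N K
  | neg : Formula N K → Formula N K
  | or : Formula N K → Formula N K → Formula N K
  | diam : Finset N → Formula N K → Formula N K
  | pref : N → Formula N K → Formula N K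

namespace Formula
variable {N K : Type}

def and (φ ψ : Formula N K) : Formula N K := neg (or (neg φ) (neg ψ))
def imp (φ ψ : Formula N K) : Formula N K := or (neg φ) ψ
def iff (φ ψ : Formula N K) : Formula N K := and (imp φ ψ) (imp ψ φ)
def box (C : Finset N) (φ : Formula N K) : Formula N K := neg (diam C (neg φ))
def prefbox (i : N) (φ : Formula N K) : Formula N K := neg (pref i (neg φ))

def conj : List (Formula N K) → Formula N K
  | [] => top
  | φ :: l => and φ (conj l)

def disj : List (Formula N K) → Formula N K
  | [] => neg top
  | φ :: l => or φ (disj l)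

end Formula

/-- A model of social choice functions over `N` and `K`: an outcome for every state
(tuple of reported linear orders) together with a true preference for every agent. -/
structure SCFModel (N K : Type) where
  out : (N → LinPref K) → K
  tpref : N → LinPref K

/-- Truth of a formula at a state of a model of SCF. -/
def Sat {N K : Type} (M : SCFModel N K) : (N → LinPref K) → Formula N K → Prop
  | _, .top => True
  | v, .atom i x y => (v i).1 x y
  | v, .outc x => M.out v = x
  | v, .neg φ => ¬ Sat M v φ
  | v, .or φ ψ => Sat M v φ ∨ Sat M v ψ
  | v, .diam C φ => ∃ u, (∀ i ∉ C, u i = v i) ∧ Sat M u φ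
  | v, .pref i φ => ∃ u, (M.tpref i).1 (M.out u) (M.out v) ∧ Sat M u φ

/-- Validity in the class of all models of SCF over `N` and `K`. -/
def Valid (N K : Type) (φ : Formula N K) : Prop :=
  ∀ (M : SCFModel N K) (v : N → LinPref K), Sat M v φ

/-- The pairs `(x,y)` such that `y` comes immediately after `x` in the linear order `r`. -/
noncomputable def adjacentPairs {K : Type} [Fintype K] (r : LinPref K) : Finset (K × K) :=
  Finset.univ.filter (fun p : K × K =>
    r.1 p.1 p.2 ∧ p.1 ≠ p.2 ∧ ¬ ∃ z : K, z ≠ p.1 ∧ z ≠ p.2 ∧ r.1 p.1 z ∧ r.1 z p.2)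

/-- `ballot_i(<)`: the conjunction `p^i_{x1≥x2} ∧ … ∧ p^i_{x_{m-1}≥x_m}` along the
permutation `[x_1,…,x_m]` of `K` listing `r` from most to least preferred. -/
noncomputable def ballotAgent {N K : Type} [Fintype K] (i : N) (r : LinPref K) : Formula N K :=
  Formula.conj ((adjacentPairs r).toList.map fun p => Formula.atom i p.1 p.2)

/-- `ballot(<) = ⋀_{i∈N} ballot_i(<)`. -/
noncomputable def ballot {N K : Type} [Fintype N] [Fintype K] (pr : N → LinPref K) :
    Formula N K :=
  Formula.conj ((Finset.univ : Finset N).toList.map fun i => ballotAgent i (pr i))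

/-- `ρ^F = ⋀_{<∈L(K)^N} ◇_N (ballot(<) ∧ F(<))`. -/
noncomputable def rhoF {N K : Type} [Fintype N] [Fintype K]
    (F : (N → LinPref K) → K) : Formula N K :=
  Formula.conj ((Finset.univ : Finset (N → LinPref K)).toList.map fun pr =>
    Formula.diam Finset.univ (Formula.and (ballot pr) (Formula.outc (F pr))))
/-- `CITSOV = ⋀_{x∈K} ◇_N x`. -/
noncomputable def CITSOV (N K : Type) [Fintype N] [Fintype K] : Formula N K :=
  Formula.conj ((Finset.univ : Finset K).toList.map fun x =>
    Formula.diam Finset.univ (Formula.outc x))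

/-- `NODICT = ⋀_{i∈N} ◇_N ( ⋁_{x∈K} ( x ∧ ⋁_{y∈K∖{x}} p^i_{y≥x} ) )`. -/
noncomputable def NODICT (N K : Type) [Fintype N] [Fintype K] : Formula N K :=
  Formula.conj ((Finset.univ : Finset N).toList.map fun i =>
    Formula.diam Finset.univ (Formula.disj ((Finset.univ : Finset K).toList.map fun x =>
      Formula.and (Formula.outc x)
        (Formula.disj ((Finset.univ.erase x).toList.map fun y => Formula.atom i y x)))))

/-- `BR_i = ⋁_{x∈K} ( x ∧ □_i ⟨pref_i⟩ x )`. -/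
noncomputable def BR {N K : Type} [Fintype K] (i : N) : Formula N K :=
  Formula.disj ((Finset.univ : Finset K).toList.map fun x =>
    Formula.and (Formula.outc x) (Formula.box {i} (Formula.pref i (Formula.outc x))))

/-- `DOM = ⋀_{i∈N} □_{N∖{i}} BR_i`. -/
noncomputable def DOM (N K : Type) [Fintype N] [Fintype K] : Formula N K :=
  Formula.conj ((Finset.univ : Finset N).toList.map fun i =>
    Formula.box (Finset.univ.erase i) (BR i))

/-- `ψ ◁_i φ  =  □_N ⋁_{<∈L(K)^N} ( ballot(<) ∧ (φ → □_N (ψ → ⟨pref_i⟩ ballot(<))) )`. -/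
noncomputable def tri {N K : Type} [Fintype N] [Fintype K]
    (i : N) (ψ φ : Formula N K) : Formula N K :=
  Formula.box Finset.univ
    (Formula.disj ((Finset.univ : Finset (N → LinPref K)).toList.map fun pr =>
      Formula.and (ballot pr)
        (Formula.imp φ
          (Formula.box Finset.univ (Formula.imp ψ (Formula.pref i (ballot pr)))))))

/-- `trueprofile_i(<) = (x_m ◁_i x_{m-1}) ∧ … ∧ (x_2 ◁_i x_1)` for `<_i = [x_1,…,x_m]`. -/
noncomputable def trueprofileAgent {N K : Type} [Fintype N] [Fintype K]
    (i : N) (r : LinPref K) : Formula N K :=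
  Formula.conj ((adjacentPairs r).toList.map fun p =>
    tri i (Formula.outc p.2) (Formula.outc p.1))

/-- `trueprofile(<) = ⋀_{i∈N} trueprofile_i(<)`. -/
noncomputable def trueprofile {N K : Type} [Fintype N] [Fintype K]
    (pr : N → LinPref K) : Formula N K :=
  Formula.conj ((Finset.univ : Finset N).toList.map fun i => trueprofileAgent i (pr i))

/-- `STRPROOF = ⋀_{<∈L(K)^N} [ trueprofile(<) → (ballot(<) → DOM) ]`. -/
noncomputable def STRPROOF (N K : Type) [Fintype N] [Fintype K] : Formula N K :=
  Formula.conj ((Finset.univ : Finset (N → LinPref K)).toList.map fun pr =>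
    Formula.imp (trueprofile pr) (Formula.imp (ballot pr) (DOM N K)))

/-- `MON`, the modal formulation of monotonicity. -/
noncomputable def MON (N K : Type) [Fintype N] [Fintype K] : Formula N K :=
  Formula.conj
    ((Finset.univ : Finset ((N → LinPref K) × (N → LinPref K) × K)).toList.map fun t =>
      Formula.imp
        (Formula.and
          (Formula.diam Finset.univ (Formula.and (ballot t.1) (Formula.outc t.2.2)))
          (Formula.conj ((Finset.univ : Finset (N × K)).toList.map fun q =>
            Formula.imp
              (Formula.diam Finset.univ
                (Formula.and (ballot t.1) (Formula.atom q.1 t.2.2 q.2)))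
              (Formula.diam Finset.univ
                (Formula.and (ballot t.2.1) (Formula.atom q.1 t.2.2 q.2))))))
        (Formula.diam Finset.univ (Formula.and (ballot t.2.1) (Formula.outc t.2.2))))

section SCFProps

variable {N K : Type}

/-- Citizen sovereignty: every outcome is feasible. -/
def CitizenSovereignty (F : (N → LinPref K) → K) : Prop :=
  ∀ x : K, ∃ pr : N → LinPref K, F pr = x

/-- Non-dictatorship: for every player `i` there is a profile `<` such that
`F(<) <_i y` for some `y ≠ F(<)`. -/
def NonDictatorial (F : (N → LinPref K) → K) : Prop :=
  ∀ i : N, ∃ (pr : N → LinPref K) (y : K), y ≠ F pr ∧ (pr i).1 y (F pr)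

/-- Monotonicity of a social choice function. -/
def Monotonic (F : (N → LinPref K) → K) : Prop :=
  ∀ (pr pr' : N → LinPref K) (x : K), F pr = x →
    (∀ (i : N) (y : K), (pr i).1 x y → (pr' i).1 x y) → F pr' = x

/-- `a` is a dominant strategy equilibrium of the direct mechanism with outcome
function `o`, for true preferences `pref`. -/
def DomEquil (o : (N → LinPref K) → K) (pref : N → LinPref K)
    (a : N → LinPref K) : Prop :=
  ∀ (i : N) (u : N → LinPref K),
    (pref i).1 (o (Function.update u i (a i))) (o u)

/-- The direct mechanism `o` truthfully DOM-implements `F`. -/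
def TruthfullyDomImplements (o F : (N → LinPref K) → K) : Prop :=
  ∀ pr : N → LinPref K, DomEquil o pr pr ∧ o pr = F pr

/-- `F` is strategy-proof: its direct mechanism `g^F` truthfully DOM-implements `F`. -/
def StrategyProof (F : (N → LinPref K) → K) : Prop :=
  TruthfullyDomImplements F F

end SCFProps

lemma sat_and {N K : Type} (M : SCFModel N K) (v : N → LinPref K) (φ ψ : Formula N K) :
    Sat M v (Formula.and φ ψ) ↔ Sat M v φ ∧ Sat M v ψ := by
  simp [Formula.and, Sat]

lemma sat_conj {N K : Type} (M : SCFModel N K) (v : N → LinPref K) (l : List (Formula N K)) :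
    Sat M v (Formula.conj l) ↔ ∀ φ ∈ l, Sat M v φ := by
  induction l with
  | nil => simp [Formula.conj, Sat]
  | cons φ l ih => simp [Formula.conj, sat_and, ih]

lemma sat_disj {N K : Type} (M : SCFModel N K) (v : N → LinPref K) (l : List (Formula N K)) :
    Sat M v (Formula.disj l) ↔ ∃ φ ∈ l, Sat M v φ := by
  induction l with
  | nil => simp [Formula.disj, Sat]
  | cons φ l ih => simp [Formula.disj, Sat, ih]

lemma sat_box {N K : Type} (M : SCFModel N K) (v : N → LinPref K) (C : Finset N)
    (φ : Formula N K) :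
    Sat M v (Formula.box C φ) ↔ ∀ u, (∀ i ∉ C, u i = v i) → Sat M u φ := by
  simp only [Formula.box, Sat]
  push_neg
  tauto

/-- A state `v*` of a model of SCF is a dominant strategy equilibrium
(for every player `i`, every tuple of strategies of the others and every strategy of `i`,
the outcome obtained by playing `v*_i` instead is at least as good for `i`)
iff `DOM` holds at `v*`. -/
theorem dominant_equilibrium_iff_DOM (N K : Type) [Fintype N] [Nonempty N] [Fintype K]
    (M : SCFModel N K) (vstar : N → LinPref K) :
    (∀ (i : N) (u : N → LinPref K),
        (M.tpref i).1 (M.out (Function.update u i (vstar i))) (M.out u)) ↔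
      Sat M vstar (DOM N K) := by
  simp only [DOM, sat_conj, List.mem_map, Finset.mem_toList, Finset.mem_univ, true_and,
    forall_exists_index]
  constructor
  · intro h φ i hφi
    subst hφi
    rw [sat_box]
    intro u hu
    simp only [BR, sat_disj, List.mem_map, Finset.mem_toList, Finset.mem_univ, true_and]
    refine ⟨_, ⟨M.out u, rfl⟩, ?_⟩
    rw [sat_and]
    refine ⟨rfl, ?_⟩
    rw [sat_box]
    intro w hw
    refine ⟨u, ?_, rfl⟩
    have hwu : Function.update w i (vstar i) = u := by
      funext j
      by_cases hj : j = i
      · rw [hj, Function.update_self]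
        exact (hu i (by simp)).symm
      · rw [Function.update_of_ne hj]
        exact hw j (by simp [hj])
    have := h i w
    rwa [hwu] at this
  · intro h i u
    have hi := h _ i rfl
    rw [sat_box] at hi
    have hBR := hi (Function.update u i (vstar i)) (by
      intro j hj
      simp only [Finset.mem_erase, Finset.mem_univ, and_true, not_not] at hj
      subst hj
      simp)
    simp only [BR, sat_disj, List.mem_map, Finset.mem_toList, Finset.mem_univ, true_and] at hBR
    obtain ⟨φ, ⟨x, rfl⟩, hφ⟩ := hBR
    rw [sat_and] at hφ
    obtain ⟨hx, hbox⟩ := hφ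
    rw [sat_box] at hbox
    obtain ⟨w', hw', hout⟩ := hbox u (by
      intro j hj
      simp only [Finset.mem_singleton] at hj
      rw [Function.update_of_ne hj])
    have : Sat M w' (Formula.outc x) := hout
    simp only [Sat] at this hx hw'
    rw [← hx] at this
    rw [this] at hw'
    exact hw'
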